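/- Sufficiency direction of the time-domain generalized KYP lemma for LTI systems (Lemma 4, (1) ⟹ (2)). Let A ∈ ℝ^{n×n}, B ∈ ℝ^{n×p}, C ∈ ℝ^{q×n}, D ∈ ℝ^{q×p} be constant matrices, let Ψ_f ∈ ℝ^{2×2} be symmetric (a finite-frequency weight matrix, e.g. the low-frequency weight [[−1,0],[0,ϖ_l²]] or the high-frequency weight [[1,0],[0,−ϖ_h²]]), let P ∈ ℝ^{n×n} be symmetric, Q ∈ ℝ^{n×n} symmetric positive semidefinite, and Π ∈ ℝ^{(q+p)×(q+p)} symmetric. Suppose the linear matrix inequality [A B; I 0]^T (Θ ⊗ P + Ψ_f ⊗ Q) [A B; I 0] + [C D; 0 I]^T Π [C D; 0 I] ⪯ 0 holds, where Θ = [[0,1],[1,0]]. Let x : [0,∞) → ℝⁿ be continuously differentiable with x(0) = 0, let u : [0,∞) → ℝ^p be continuous, assume ẋ(t) = A x(t) + B u(t) for all t ≥ 0, and set y(t) = C x(t) + D u(t). Assume the IQC: writing Z(t) for the n×2 matrix whose columns are ẋ(t) and x(t), the function t ↦ Z(t) Ψ_f Z(t)^T is integrable on [0,∞) and ∫₀^∞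 Z(t) Ψ_f Z(t)^T dt is positive semidefinite. If moreover t ↦ [y(t); u(t)]^T Π [y(t); u(t)] is integrable on [0,∞) and lim_{T→∞} x(T)^T P x(T) exists and is nonnegative, then ∫₀^∞ [y(t); u(t)]^T Π [y(t); u(t)] dt ≤ 0. -/

import Mathlib

open Matrix MeasureTheory
open scoped Matrix.Norms.L2Operator

/-- `Ψ ⊗ Q`: the Kronecker product of a `2×2` real matrix with an `n×n` real matrix,
realized as a `2n × 2n` block matrix. -/
noncomputable def kron2R {n : ℕ} (Ψ : Matrix (Fin 2) (Fin 2) ℝ)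
    (Q : Matrix (Fin n) (Fin n) ℝ) : Matrix (Fin n ⊕ Fin n) (Fin n ⊕ Fin n) ℝ :=
  Matrix.fromBlocks (Ψ 0 0 • Q) (Ψ 0 1 • Q) (Ψ 1 0 • Q) (Ψ 1 1 • Q)

/-- The quadratic form `z ↦ zᵀ H z` over the reals. -/
noncomputable def qfR {m : Type*} [Fintype m] (H : Matrix m m ℝ) (z : m → ℝ) : ℝ :=
  dotProduct z (H.mulVec z)

/-- The `n×2` matrix `Z(t)` whose columns are `ẋ(t)` and `x(t)`. -/
noncomputable def Zmat {n : ℕ} (xd xv : Fin n → ℝ) : Matrix (Fin n) (Fin 2) ℝ :=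
  Matrix.of fun i j => ![xd i, xv i] j

/-! The LMI, evaluated at `(x(t), u(t))`, is a pointwise dissipation inequality: since
`[A B; I 0] (x, u) = (ẋ, x)`, the `Θ ⊗ P` term becomes `d/dt (xᵀ P x)` and the `Ψ_f ⊗ Q` term becomes
`tr (Q Z Ψ_f Zᵀ)`. Integrating over `[0, T]` from `x(0) = 0` and letting `T → ∞` bounds the
performance integral by `-lim xᵀ P x - tr (Q ∫ Z Ψ_f Zᵀ)`, and both terms are nonpositive because
the trace of a product of positive semidefinite matrices is nonnegative. -/

open Set Filter Topology

open scoped ComplexOrder in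
theorem Matrix.PosSemidef.trace_mul_nonneg {𝕜 m : Type*} [RCLike 𝕜] [Fintype m] [DecidableEq m]
    {A B : Matrix m m 𝕜} (hA : A.PosSemidef) (hB : B.PosSemidef) : 0 ≤ (A * B).trace := by
  open MatrixOrder in
  obtain ⟨R, rfl⟩ := CStarAlgebra.nonneg_iff_eq_star_mul_self.mp hA.nonneg
  rw [star_eq_conjTranspose, Matrix.mul_assoc, trace_mul_comm]
  exact (hB.mul_mul_conjTranspose_same R).trace_nonneg

section QuadraticForm

variable {m m' : Type*} [Fintype m] [Fintype m']

theorem qfR_add (M N : Matrix m m ℝ) (z : m → ℝ) : qfR (M + N) z = qfR M z + qfR N z := by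
  rw [qfR, qfR, qfR, add_mulVec, dotProduct_add]

theorem qfR_transpose_mul_mul (M : Matrix m' m ℝ) (N : Matrix m' m' ℝ) (z : m → ℝ) :
    qfR (Mᵀ * N * M) z = qfR N (M *ᵥ z) := by
  rw [qfR, qfR, ← mulVec_mulVec, ← mulVec_mulVec, dotProduct_mulVec z Mᵀ, vecMul_transpose]

theorem qfR_nonpos_of_posSemidef_neg {M : Matrix m m ℝ} (hM : (-M).PosSemidef) (z : m → ℝ) :
    qfR M z ≤ 0 := by
  simpa [qfR, neg_mulVec] using hM.dotProduct_mulVec_nonneg z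

theorem HasDerivAt.dotProduct {𝕜 : Type*} [NontriviallyNormedField 𝕜] {v w : 𝕜 → m → 𝕜}
    {v' w' : m → 𝕜} {t : 𝕜} (hv : HasDerivAt v v' t) (hw : HasDerivAt w w' t) :
    HasDerivAt (fun s => v s ⬝ᵥ w s) (v' ⬝ᵥ w t + v t ⬝ᵥ w') t := by
  have h := HasDerivAt.fun_sum (u := Finset.univ) fun i _ =>
    (hasDerivAt_pi.1 hv i).mul (hasDerivAt_pi.1 hw i)
  rw [Finset.sum_add_distrib] at h
  exact h

theorem HasDerivAt.qfR (P : Matrix m m ℝ) {x : ℝ → m → ℝ} {x' : m → ℝ} {t : ℝ}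
    (hx : HasDerivAt x x' t) :
    HasDerivAt (fun s => qfR P (x s)) (x' ⬝ᵥ P *ᵥ x t + x t ⬝ᵥ P *ᵥ x') t :=
  hx.dotProduct (P.mulVecLin.toContinuousLinearMap.hasFDerivAt.comp_hasDerivAt t hx)

end QuadraticForm

section Kronecker

variable {n : ℕ}

theorem qfR_kron2R (Ψ : Matrix (Fin 2) (Fin 2) ℝ) (Q : Matrix (Fin n) (Fin n) ℝ)
    (a b : Fin n → ℝ) :
    qfR (kron2R Ψ Q) (Sum.elim a b) =
      Ψ 0 0 * (a ⬝ᵥ Q *ᵥ a) + Ψ 0 1 * (a ⬝ᵥ Q *ᵥ b) +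
        Ψ 1 0 * (b ⬝ᵥ Q *ᵥ a) + Ψ 1 1 * (b ⬝ᵥ Q *ᵥ b) := by
  simp only [qfR, kron2R, fromBlocks_mulVec, sumElim_dotProduct_sumElim, smul_mulVec,
    Sum.elim_comp_inl, Sum.elim_comp_inr, dotProduct_add, dotProduct_smul, smul_eq_mul]
  ring

theorem qfR_kron2R_swap (P : Matrix (Fin n) (Fin n) ℝ) (a b : Fin n → ℝ) :
    qfR (kron2R !![0, 1; 1, 0] P) (Sum.elim a b) = a ⬝ᵥ P *ᵥ b + b ⬝ᵥ P *ᵥ a := by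
  simp [qfR_kron2R]

theorem Zmat_transpose_mul_mul_Zmat (Q : Matrix (Fin n) (Fin n) ℝ) (a b : Fin n → ℝ) :
    (Zmat a b)ᵀ * Q * Zmat a b = !![a ⬝ᵥ Q *ᵥ a, a ⬝ᵥ Q *ᵥ b; b ⬝ᵥ Q *ᵥ a, b ⬝ᵥ Q *ᵥ b] := by
  ext i j
  fin_cases i <;> fin_cases j <;> exact (dotProduct_mulVec _ _ _).symm

theorem trace_mul_Zmat_mul_transpose (Ψ : Matrix (Fin 2) (Fin 2) ℝ)
    (Q : Matrix (Fin n) (Fin n) ℝ) (a b : Fin n → ℝ) :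
    (Q * (Zmat a b * Ψ * (Zmat a b)ᵀ)).trace = qfR (kron2R Ψᵀ Q) (Sum.elim a b) := by
  rw [← Matrix.mul_assoc, trace_mul_comm, ← Matrix.mul_assoc, ← Matrix.mul_assoc,
    trace_mul_comm, Zmat_transpose_mul_mul_Zmat, qfR_kron2R]
  simp only [trace_fin_two, mul_apply, Fin.sum_univ_two, transpose_apply, of_apply, cons_val',
    cons_val_zero, cons_val_one, cons_val_fin_one]
  ring

end Kronecker

theorem gKYP_dissipation_inequality {n : ℕ} {ι κ : Type*} [Fintype ι] [Fintype κ]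
    {Ψf : Matrix (Fin 2) (Fin 2) ℝ} {P Q : Matrix (Fin n) (Fin n) ℝ} {Pi : Matrix κ κ ℝ}
    {Mx : Matrix (Fin n ⊕ Fin n) ι ℝ} {My : Matrix κ ι ℝ} (hΨf : Ψf.IsSymm)
    (hLMI : (-(Mxᵀ * (kron2R !![0, 1; 1, 0] P + kron2R Ψf Q) * Mx + Myᵀ * Pi * My)).PosSemidef)
    {z : ι → ℝ} {xd xv : Fin n → ℝ} {w : κ → ℝ}
    (hx : Mx *ᵥ z = Sum.elim xd xv) (hw : My *ᵥ z = w) :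
    qfR Pi w + (Q * (Zmat xd xv * Ψf * (Zmat xd xv)ᵀ)).trace +
      (xd ⬝ᵥ P *ᵥ xv + xv ⬝ᵥ P *ᵥ xd) ≤ 0 := by
  have h := qfR_nonpos_of_posSemidef_neg hLMI z
  rw [qfR_add, qfR_transpose_mul_mul, qfR_transpose_mul_mul, hx, hw, qfR_add,
    qfR_kron2R_swap] at h
  rw [trace_mul_Zmat_mul_transpose, hΨf.eq]
  linarith

section Integral

variable {α m : Type*} [MeasurableSpace α] {μ : Measure α} [Fintype m] [DecidableEq m]

theorem MeasureTheory.Integrable.trace_mul_left (Q : Matrix m m ℝ) {S : α → Matrix m m ℝ}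
    (hS : Integrable S μ) : Integrable (fun t => (Q * S t).trace) μ :=
  (LinearMap.toContinuousLinearMap
    ((traceLinearMap m ℝ ℝ).comp (LinearMap.mulLeft ℝ Q))).integrable_comp hS

theorem integral_trace_mul_left (Q : Matrix m m ℝ) {S : α → Matrix m m ℝ}
    (hS : Integrable S μ) : ∫ t, (Q * S t).trace ∂μ = (Q * ∫ t, S t ∂μ).trace :=
  (LinearMap.toContinuousLinearMap
    ((traceLinearMap m ℝ ℝ).comp (LinearMap.mulLeft ℝ Q))).integral_comp_comm hS

end Integral

theorem integral_Ioi_le_sub_of_hasDerivAt_of_tendsto {F F' φ : ℝ → ℝ} {a L : ℝ}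
    (hF : ∀ t ∈ Ici a, HasDerivAt F (F' t) t) (hφ : IntegrableOn φ (Ioi a))
    (hle : ∀ t ∈ Ioi a, φ t + F' t ≤ 0) (hlim : Tendsto F atTop (𝓝 L)) :
    ∫ t in Ioi a, φ t ≤ F a - L := by
  have hbound : ∀ᶠ T in atTop, ∫ t in a..T, φ t ≤ F a - F T := by
    filter_upwards [eventually_ge_atTop a] with T haT
    have h : ∫ t in a..T, φ t ≤ -F T - -F a :=
      intervalIntegral.integral_le_sub_of_hasDeriv_right_of_le haT
        (fun t ht => (hF t ht.1).continuousAt.continuousWithinAt.neg)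
        (fun t ht => (hF t ht.1.le).neg.hasDerivWithinAt)
        ((integrableOn_Icc_iff_integrableOn_Ioc (by simp)).mpr
          (hφ.mono_set Ioc_subset_Ioi_self))
        (fun t ht => by linarith [hle t ht.1])
    linarith
  exact le_of_tendsto_of_tendsto (intervalIntegral_tendsto_integral_Ioi a hφ tendsto_id)
    (tendsto_const_nhds.sub hlim) hbound

theorem gKYP_sufficiency_time_domain_LTI_general
    {n p q : ℕ}
    (A : Matrix (Fin n) (Fin n) ℝ) (B : Matrix (Fin n) (Fin p) ℝ)
    (C : Matrix (Fin q) (Fin n) ℝ) (D : Matrix (Fin q) (Fin p) ℝ)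
    (Ψf : Matrix (Fin 2) (Fin 2) ℝ) (hΨf : Ψf.IsSymm)
    (P : Matrix (Fin n) (Fin n) ℝ)
    (Q : Matrix (Fin n) (Fin n) ℝ) (hQ : Q.PosSemidef)
    (Pi : Matrix (Fin q ⊕ Fin p) (Fin q ⊕ Fin p) ℝ)
    -- the gKYP linear matrix inequality
    (hLMI : Matrix.PosSemidef
      (-((Matrix.fromBlocks A B (1 : Matrix (Fin n) (Fin n) ℝ) 0)ᵀ *
            (kron2R !![0,1;1,0] P + kron2R Ψf Q) *
            Matrix.fromBlocks A B 1 0 +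
          (Matrix.fromBlocks C D (0 : Matrix (Fin p) (Fin n) ℝ) 1)ᵀ * Pi * Matrix.fromBlocks C D 0 1)))
    (x : ℝ → Fin n → ℝ) (x' : ℝ → Fin n → ℝ)
    (hx : ∀ t ∈ Set.Ici (0:ℝ), HasDerivAt x (x' t) t)
    (hx0 : x 0 = 0)
    (u : ℝ → Fin p → ℝ)
    (hode : ∀ t ∈ Set.Ici (0:ℝ), x' t = A.mulVec (x t) + B.mulVec (u t))
    (y : ℝ → Fin q → ℝ)
    (hy : ∀ t ∈ Set.Ici (0:ℝ), y t = C.mulVec (x t) + D.mulVec (u t))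
    -- the IQC: the matrix ∫₀^∞ Z(t) Ψ_f Z(t)ᵀ dt is positive semidefinite
    (hIQCint : IntegrableOn
      (fun t => Zmat (x' t) (x t) * Ψf * (Zmat (x' t) (x t))ᵀ) (Set.Ioi 0))
    (hIQC : Matrix.PosSemidef
      (∫ t in Set.Ioi (0:ℝ), Zmat (x' t) (x t) * Ψf * (Zmat (x' t) (x t))ᵀ))
    (hPerfInt : IntegrableOn (fun t => qfR Pi (Sum.elim (y t) (u t))) (Set.Ioi 0))
    (hlim : ∃ L : ℝ, 0 ≤ L ∧
      Filter.Tendsto (fun T => qfR P (x T)) Filter.atTop (nhds L)) :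
    ∫ t in Set.Ioi (0:ℝ), qfR Pi (Sum.elim (y t) (u t)) ≤ 0 := by
  obtain ⟨L, hL0, hL⟩ := hlim
  have hIQCtrace_int := hIQCint.trace_mul_left Q
  have hIQCtrace_nonneg :
      0 ≤ ∫ t in Ioi 0, (Q * (Zmat (x' t) (x t) * Ψf * (Zmat (x' t) (x t))ᵀ)).trace := by
    rw [integral_trace_mul_left Q hIQCint]
    exact hQ.trace_mul_nonneg hIQC
  have hpoint : ∀ t ∈ Ioi (0 : ℝ), qfR Pi (Sum.elim (y t) (u t)) +
      (Q * (Zmat (x' t) (x t) * Ψf * (Zmat (x' t) (x t))ᵀ)).trace +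
        (x' t ⬝ᵥ P *ᵥ x t + x t ⬝ᵥ P *ᵥ x' t) ≤ 0 := fun t ht =>
    gKYP_dissipation_inequality (Mx := fromBlocks A B 1 0) (My := fromBlocks C D 0 1)
      (z := Sum.elim (x t) (u t)) hΨf hLMI
      (by simp [fromBlocks_mulVec, hode t (Ioi_subset_Ici_self ht)])
      (by simp [fromBlocks_mulVec, hy t (Ioi_subset_Ici_self ht)])
  have hdiss := integral_Ioi_le_sub_of_hasDerivAt_of_tendsto (fun t ht => (hx t ht).qfR P)
    (hPerfInt.fun_add hIQCtrace_int) hpoint hL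
  have hstorage0 : qfR P (x 0) = 0 := by simp [hx0, qfR]
  rw [integral_add hPerfInt hIQCtrace_int, hstorage0] at hdiss
  linarith

/-- Sufficiency direction of the time-domain generalized KYP lemma for LTI systems
(Lemma 4, (1) ⟹ (2)). -/
theorem gKYP_sufficiency_time_domain_LTI
    {n p q : ℕ}
    (A : Matrix (Fin n) (Fin n) ℝ) (B : Matrix (Fin n) (Fin p) ℝ)
    (C : Matrix (Fin q) (Fin n) ℝ) (D : Matrix (Fin q) (Fin p) ℝ)
    (Ψf : Matrix (Fin 2) (Fin 2) ℝ) (hΨf : Ψf.IsSymm)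
    (P : Matrix (Fin n) (Fin n) ℝ) (hP : P.IsSymm)
    (Q : Matrix (Fin n) (Fin n) ℝ) (hQ : Q.PosSemidef)
    (Pi : Matrix (Fin q ⊕ Fin p) (Fin q ⊕ Fin p) ℝ) (hPi : Pi.IsSymm)
    -- the gKYP linear matrix inequality
    (hLMI : Matrix.PosSemidef
      (-((Matrix.fromBlocks A B (1 : Matrix (Fin n) (Fin n) ℝ) 0)ᵀ *
            (kron2R !![0,1;1,0] P + kron2R Ψf Q) *
            Matrix.fromBlocks A B 1 0 +
          (Matrix.fromBlocks C D (0 : Matrix (Fin p) (Fin n) ℝ) 1)ᵀ * Pi * Matrix.fromBlocks C D 0 1)))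
    (x : ℝ → Fin n → ℝ) (x' : ℝ → Fin n → ℝ)
    (hx : ∀ t ∈ Set.Ici (0:ℝ), HasDerivAt x (x' t) t)
    (hx'c : ContinuousOn x' (Set.Ici 0))
    (hx0 : x 0 = 0)
    (u : ℝ → Fin p → ℝ) (hu : ContinuousOn u (Set.Ici 0))
    (hode : ∀ t ∈ Set.Ici (0:ℝ), x' t = A.mulVec (x t) + B.mulVec (u t))
    (y : ℝ → Fin q → ℝ)
    (hy : ∀ t ∈ Set.Ici (0:ℝ), y t = C.mulVec (x t) + D.mulVec (u t))
    -- the IQC: the matrix ∫₀^∞ Z(t) Ψ_f Z(t)ᵀ dt is positive semidefinite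
    (hIQCint : IntegrableOn
      (fun t => Zmat (x' t) (x t) * Ψf * (Zmat (x' t) (x t))ᵀ) (Set.Ioi 0))
    (hIQC : Matrix.PosSemidef
      (∫ t in Set.Ioi (0:ℝ), Zmat (x' t) (x t) * Ψf * (Zmat (x' t) (x t))ᵀ))
    (hPerfInt : IntegrableOn (fun t => qfR Pi (Sum.elim (y t) (u t))) (Set.Ioi 0))
    (hlim : ∃ L : ℝ, 0 ≤ L ∧
      Filter.Tendsto (fun T => qfR P (x T)) Filter.atTop (nhds L)) :
    ∫ t in Set.Ioi (0:ℝ), qfR Pi (Sum.elim (y t) (u t)) ≤ 0 :=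
  gKYP_sufficiency_time_domain_LTI_general A B C D Ψf hΨf P Q hQ Pi hLMI x x' hx hx0 u hode y hy
    hIQCint hIQC hPerfInt hlim
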